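/- Every set of strong measure zero belongs to 𝓜': 𝓢 ⊆ 𝓜'. -/
import Mathlib


open MeasureTheory Filter

/-- `S ⊆ ℝ` is an interval. -/
def IsIntervalSet (S : Set ℝ) : Prop := S.OrdConnected

/-- A set `M ⊆ ℝ` is microscopic if for each `ε > 0` there is a sequence of intervals
`(J n)` covering `M` with `|J n| ≤ ε ^ (n + 1)` for each `n`. -/
def Microscopic (M : Set ℝ) : Prop :=
  ∀ ε : ℝ, 0 < ε → ∃ J : ℕ → Set ℝ,
    (∀ n, IsIntervalSet (J n)) ∧ M ⊆ (⋃ n, J n) ∧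
      ∀ n, volume (J n) ≤ ENNReal.ofReal (ε ^ (n + 1))

/-- `A ⊆ ℕ` has asymptotic density zero. -/
def DensityZero (A : Set ℕ) : Prop :=
  Tendsto (fun j : ℕ => ((A ∩ Set.Iic j).ncard : ℝ) / ((j : ℝ) + 1)) atTop (nhds 0)

/-- A set `M ⊆ ℝ` belongs to `𝓜'` if for every `ε > 0` there are `D ⊆ ℕ` of asymptotic
density zero and intervals `(J d)_{d ∈ D}` covering `M` with `|J d| ≤ ε ^ (d + 1)`. -/
def MPrime (M : Set ℝ) : Prop :=
  ∀ ε : ℝ, 0 < ε → ∃ D : Set ℕ, DensityZero D ∧ ∃ J : ℕ → Set ℝ,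
    (∀ d ∈ D, IsIntervalSet (J d)) ∧ M ⊆ (⋃ d ∈ D, J d) ∧
      ∀ d ∈ D, volume (J d) ≤ ENNReal.ofReal (ε ^ (d + 1))

/-- A set `S ⊆ ℝ` has strong measure zero. -/
def StrongMeasureZero (S : Set ℝ) : Prop :=
  ∀ ε : ℕ → ℝ, (∀ n, 0 < ε n) → ∃ J : ℕ → Set ℝ,
    (∀ n, IsIntervalSet (J n)) ∧ S ⊆ (⋃ n, J n) ∧
      ∀ n, volume (J n) ≤ ENNReal.ofReal (ε n)


private theorem sqrt_nat_tendsto' : Tendsto Nat.sqrt atTop atTop := by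
  apply tendsto_atTop_atTop_of_monotone (fun a b h => Nat.sqrt_le_sqrt h)
  intro b
  exact ⟨b*b, le_of_eq (Nat.sqrt_eq b).symm⟩

private theorem dz_squares' : DensityZero (Set.range (fun n : ℕ => n*n)) := by
  have hb : ∀ j : ℕ, ((Set.range (fun n : ℕ => n*n) ∩ Set.Iic j).ncard : ℝ) / ((j : ℝ) + 1) ≤ 2 / (Nat.sqrt j + 1) := by
    intro j
    set s := Nat.sqrt j with hs
    have hsub : Set.range (fun n : ℕ => n*n) ∩ Set.Iic j ⊆ (fun n : ℕ => n*n) '' Set.Iic s := by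
      rintro d ⟨⟨n, rfl⟩, hd⟩
      exact ⟨n, Nat.le_sqrt.2 hd, rfl⟩
    have hcard : (Set.range (fun n : ℕ => n*n) ∩ Set.Iic j).ncard ≤ s + 1 := by
      calc (Set.range (fun n : ℕ => n*n) ∩ Set.Iic j).ncard
          ≤ ((fun n : ℕ => n*n) '' Set.Iic s).ncard :=
            Set.ncard_le_ncard hsub ((Set.finite_Iic s).image _)
        _ ≤ (Set.Iic s).ncard := Set.ncard_image_le (Set.finite_Iic s)
        _ = s + 1 := by
            simp [Set.ncard_eq_toFinset_card', Set.toFinset_Iic, Nat.card_Iic]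
    have h1 : (0:ℝ) < (j:ℝ) + 1 := by positivity
    have h2 : (0:ℝ) < (s:ℝ) + 1 := by positivity
    rw [div_le_div_iff₀ h1 h2]
    have hcard' : ((Set.range (fun n : ℕ => n*n) ∩ Set.Iic j).ncard : ℝ) ≤ (s:ℝ) + 1 := by
      exact_mod_cast hcard
    have hjs : (s:ℝ)^2 ≤ (j:ℝ) := by exact_mod_cast Nat.sqrt_le' j
    nlinarith [sq_nonneg ((s:ℝ) - 1)]
  apply squeeze_zero (fun j => by positivity) hb
  apply Tendsto.div_atTop tendsto_const_nhds
  have : Tendsto (fun j : ℕ => ((Nat.sqrt j : ℝ))) atTop atTop :=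
    tendsto_natCast_atTop_atTop.comp sqrt_nat_tendsto'
  exact tendsto_atTop_add_const_right _ 1 this

theorem smz_subset_mprime (S : Set ℝ) (hS : StrongMeasureZero S) : MPrime S := by
  intro ε hε
  obtain ⟨J, hJint, hJcov, hJvol⟩ := hS (fun n => ε ^ (n*n + 1)) (fun n => pow_pos hε _)
  refine ⟨Set.range (fun n : ℕ => n*n), dz_squares', fun d => J (Nat.sqrt d), ?_, ?_, ?_⟩
  · intro d _; exact hJint _
  · intro x hx
    obtain ⟨_, ⟨n, rfl⟩, hxn⟩ := hJcov hx
    simp only [Set.mem_iUnion]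
    exact ⟨n*n, ⟨n, rfl⟩, by rwa [Nat.sqrt_eq]⟩
  · rintro d ⟨n, rfl⟩
    simp only [Nat.sqrt_eq]
    exact hJvol n
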